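/- arXiv:2108.04126 — 3 statements merged into one kernel-verified Lean document; each statement's English description precedes it below -/
import Mathlib

section
/- Let f : {0,1}^k → ℝ be monotone in feature i (for each α ∈ {0,1}, all numbers f(x) − f(x^{¬i}) with x_i = α have the same sign). For any coefficient function w : 2^U → ℝ_{≥0} with Σ_{S ⊆ U\{i}} w(S) = 1, define ω_i^w(x) = Σ_{S ⊆ U\{i}} w(S)·(g*_x(S ∪ {i}) − g*_x(S)) and the total impact Ω_i^w = Σ_{x ∈ {0,1}^k} |ω_i^w(x)|. Then Ω_i^w = (1/2) · Σ_{x ∈ {0,1}^k} |f(x) − f(x^{¬i})|; in particular Ω_i^w is independent of w. -/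
open Finset

noncomputable def cubeG (k : ℕ) (f : (Fin k → Bool) → ℝ) (x : Fin k → Bool)
    (S : Finset (Fin k)) : ℝ :=
  (∑ x' ∈ univ.filter (fun x' : Fin k → Bool => ∀ j ∈ S, x' j = x j), f x') /
    (2 : ℝ) ^ (k - S.card)

def flipAt (k : ℕ) (x : Fin k → Bool) (i : Fin k) : Fin k → Bool :=
  Function.update x i (!x i)

lemma card_agree (k : ℕ) (T : Finset (Fin k)) (x : Fin k → Bool) :
    (univ.filter (fun x' : Fin k → Bool => ∀ j ∈ T, x' j = x j)).card = 2 ^ (k - T.card) := by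
  rw [← Fintype.card_subtype]
  have e : {x' : Fin k → Bool // ∀ j ∈ T, x' j = x j} ≃ ((↥(Tᶜ : Finset (Fin k))) → Bool) :=
    { toFun := fun x' j => x'.1 j.1
      invFun := fun g => ⟨fun j => if h : j ∈ T then x j else g ⟨j, by simpa using h⟩,
        fun j hj => by simp [hj]⟩
      left_inv := fun x' => by
        ext j; by_cases h : j ∈ T <;> simp [h, x'.2]
      right_inv := fun g => by
        ext j
        have : j.1 ∉ T := Finset.mem_compl.mp j.2
        simp [this] }
  rw [Fintype.card_congr e]
  simp [card_compl]

lemma sum_sum_agree (k : ℕ) (T : Finset (Fin k)) (h : (Fin k → Bool) → ℝ) :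
    ∑ x : Fin k → Bool, ∑ x' ∈ univ.filter (fun x' : Fin k → Bool => ∀ j ∈ T, x' j = x j), h x'
      = (2 : ℝ) ^ (k - T.card) * ∑ x' : Fin k → Bool, h x' := by
  simp only [Finset.sum_filter]
  rw [Finset.sum_comm]
  have : ∀ x' : Fin k → Bool,
      (∑ x : Fin k → Bool, if ∀ j ∈ T, x' j = x j then h x' else 0)
        = (2 : ℝ) ^ (k - T.card) * h x' := by
    intro x'
    have hc : (univ.filter fun x : Fin k → Bool => ∀ j ∈ T, x' j = x j).card
        = 2 ^ (k - T.card) := by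
      rw [← card_agree k T x']
      congr 1
      apply filter_congr
      intro x _
      constructor <;> intro hh j hj <;> exact (hh j hj).symm
    rw [← Finset.sum_filter, Finset.sum_const, hc, nsmul_eq_mul]
    push_cast
    ring
  rw [Finset.sum_congr rfl (fun x' _ => this x'), ← Finset.mul_sum]

lemma flipAt_apply_self (k : ℕ) (x : Fin k → Bool) (i : Fin k) :
    flipAt k x i i = !x i := by simp [flipAt]

lemma flipAt_apply_ne (k : ℕ) (x : Fin k → Bool) (i j : Fin k) (h : j ≠ i) :
    flipAt k x i j = x j := by simp [flipAt, Function.update_of_ne h]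

lemma flipAt_flipAt (k : ℕ) (x : Fin k → Bool) (i : Fin k) :
    flipAt k (flipAt k x i) i = x := by
  funext j
  by_cases h : j = i
  · subst h; simp [flipAt]
  · rw [flipAt_apply_ne _ _ _ _ h, flipAt_apply_ne _ _ _ _ h]

lemma cubeG_diff (k : ℕ) (f : (Fin k → Bool) → ℝ) (i : Fin k) (S : Finset (Fin k))
    (hiS : i ∉ S) (x : Fin k → Bool) :
    cubeG k f x (insert i S) - cubeG k f x S
      = (∑ x' ∈ univ.filter (fun x' : Fin k → Bool => ∀ j ∈ insert i S, x' j = x j),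
          (f x' - f (flipAt k x' i))) / (2 : ℝ) ^ (k - S.card) := by
  classical
  set B := univ.filter (fun x' : Fin k → Bool => ∀ j ∈ S, x' j = x j) with hB
  set A := univ.filter (fun x' : Fin k → Bool => ∀ j ∈ insert i S, x' j = x j) with hA
  have hAB : A = B.filter (fun x' => x' i = x i) := by
    ext x'
    simp only [hA, hB, mem_filter, mem_univ, true_and, Finset.forall_mem_insert]
    tauto
  have hBsplit : ∑ x' ∈ B, f x'
      = ∑ x' ∈ A, f x' + ∑ x' ∈ B.filter (fun x' => ¬ (x' i = x i)), f x' := by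
    rw [hAB, Finset.sum_filter_add_sum_filter_not]
  have hbij : ∑ x' ∈ B.filter (fun x' => ¬ (x' i = x i)), f x'
      = ∑ x' ∈ A, f (flipAt k x' i) := by
    apply Finset.sum_nbij' (i := fun x' => flipAt k x' i) (j := fun x' => flipAt k x' i)
    · intro a ha
      simp only [hB, mem_filter, mem_univ, true_and] at ha
      simp only [hA, mem_filter, mem_univ, true_and, Finset.forall_mem_insert]
      obtain ⟨h1, h2⟩ := ha
      constructor
      · rw [flipAt_apply_self]
        revert h2; cases a i <;> cases x i <;> simp
      · intro j hj
        have hji : j ≠ i := by rintro rfl; exact hiS hj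
        rw [flipAt_apply_ne _ _ _ _ hji]
        exact h1 j hj
    · intro a ha
      simp only [hA, mem_filter, mem_univ, true_and, Finset.forall_mem_insert] at ha
      simp only [hB, mem_filter, mem_univ, true_and]
      obtain ⟨h1, h2⟩ := ha
      constructor
      · intro j hj
        have hji : j ≠ i := by rintro rfl; exact hiS hj
        rw [flipAt_apply_ne _ _ _ _ hji]
        exact h2 j hj
      · rw [flipAt_apply_self, h1]
        cases x i <;> simp
    · intro a _; exact flipAt_flipAt k a i
    · intro a _; exact flipAt_flipAt k a i
    · intro a ha; rw [flipAt_flipAt]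
  have hcard : (insert i S).card = S.card + 1 := Finset.card_insert_of_notMem hiS
  have hle : S.card + 1 ≤ k := by
    have := Finset.card_le_univ (insert i S)
    simpa [hcard] using this
  have hpow : (2 : ℝ) ^ (k - S.card) = 2 * (2 : ℝ) ^ (k - (S.card + 1)) := by
    rw [← pow_succ']
    congr 1
    omega
  have hpos : (0:ℝ) < (2 : ℝ) ^ (k - (S.card + 1)) := by positivity
  rw [cubeG, cubeG, ← hA, ← hB, hBsplit, hbij, hcard, hpow, Finset.sum_sub_distrib]
  field_simp
  ring

theorem total_impact_independent_of_weights
    (k : ℕ) (f : (Fin k → Bool) → ℝ) (i : Fin k)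
    (hmono : ∃ ε : ℝ, (ε = 1 ∨ ε = -1) ∧
      ∀ x : Fin k → Bool, x i = true → 0 ≤ ε * (f x - f (flipAt k x i)))
    (w : Finset (Fin k) → ℝ) (hw0 : ∀ S, 0 ≤ w S)
    (hw1 : ∑ S ∈ ((univ : Finset (Fin k)).erase i).powerset, w S = 1) :
    ∑ x : Fin k → Bool,
        |∑ S ∈ ((univ : Finset (Fin k)).erase i).powerset,
            w S * (cubeG k f x (insert i S) - cubeG k f x S)|
      = (1 / 2) * ∑ x : Fin k → Bool, |f x - f (flipAt k x i)| := by
  classical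
  obtain ⟨ε, hε, hm⟩ := hmono
  have hεabs : |ε| = 1 := by rcases hε with h | h <;> simp [h]
  set d : (Fin k → Bool) → ℝ := fun y => f y - f (flipAt k y i) with hd
  set sg : (Fin k → Bool) → ℝ := fun y => if y i = true then ε else -ε with hsg
  have hsgabs : ∀ y, |sg y| = 1 := by
    intro y; simp only [hsg]; split <;> simp [hεabs]
  have habs : ∀ y, sg y * d y = |d y| := by
    intro y
    have h0 : 0 ≤ sg y * d y := by
      by_cases h : y i = true
      · simpa [hsg, h, hd] using hm y h
      · have hx : (flipAt k y i) i = true := by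
          rw [flipAt_apply_self]
          simp only [Bool.not_eq_true] at h
          simp [h]
        have h2 := hm (flipAt k y i) hx
        rw [flipAt_flipAt] at h2
        have h3 : sg y * d y = ε * (f (flipAt k y i) - f y) := by
          simp only [hsg, hd]
          rw [if_neg h]
          ring
        rw [h3]; exact h2
    rw [← abs_of_nonneg h0, abs_mul, hsgabs, one_mul]
  have key : ∀ x : Fin k → Bool,
      |∑ S ∈ ((univ : Finset (Fin k)).erase i).powerset,
          w S * (cubeG k f x (insert i S) - cubeG k f x S)|
      = ∑ S ∈ ((univ : Finset (Fin k)).erase i).powerset,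
          w S * ((∑ x' ∈ univ.filter (fun x' : Fin k → Bool => ∀ j ∈ insert i S, x' j = x j),
            |d x'|) / (2:ℝ) ^ (k - S.card)) := by
    intro x
    have hrw : ∀ S ∈ ((univ : Finset (Fin k)).erase i).powerset,
        w S * (cubeG k f x (insert i S) - cubeG k f x S)
          = w S * ((∑ x' ∈ univ.filter (fun x' : Fin k → Bool => ∀ j ∈ insert i S, x' j = x j),
              d x') / (2:ℝ) ^ (k - S.card)) := by
      intro S hS
      have hiS : i ∉ S := fun hin =>
        (Finset.mem_erase.mp (Finset.mem_powerset.mp hS hin)).1 rfl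
      rw [cubeG_diff k f i S hiS x]
    rw [Finset.sum_congr rfl hrw]
    have hmul : sg x * ∑ S ∈ ((univ : Finset (Fin k)).erase i).powerset,
        w S * ((∑ x' ∈ univ.filter (fun x' : Fin k → Bool => ∀ j ∈ insert i S, x' j = x j),
            d x') / (2:ℝ) ^ (k - S.card))
        = ∑ S ∈ ((univ : Finset (Fin k)).erase i).powerset,
          w S * ((∑ x' ∈ univ.filter (fun x' : Fin k → Bool => ∀ j ∈ insert i S, x' j = x j),
            |d x'|) / (2:ℝ) ^ (k - S.card)) := by
      rw [Finset.mul_sum]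
      apply Finset.sum_congr rfl
      intro S _
      have hA : ∀ x' ∈ univ.filter (fun x' : Fin k → Bool => ∀ j ∈ insert i S, x' j = x j),
          |d x'| = sg x * d x' := by
        intro x' hx'
        have hxi : x' i = x i := (Finset.mem_filter.mp hx').2 i (Finset.mem_insert_self i S)
        have hsgeq : sg x' = sg x := by simp only [hsg, hxi]
        rw [← hsgeq, habs]
      rw [Finset.sum_congr rfl hA, ← Finset.mul_sum]
      ring
    have hnn : 0 ≤ ∑ S ∈ ((univ : Finset (Fin k)).erase i).powerset,
        w S * ((∑ x' ∈ univ.filter (fun x' : Fin k → Bool => ∀ j ∈ insert i S, x' j = x j),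
            |d x'|) / (2:ℝ) ^ (k - S.card)) := by
      apply Finset.sum_nonneg
      intro S _
      exact mul_nonneg (hw0 S) (div_nonneg
        (Finset.sum_nonneg fun _ _ => abs_nonneg _) (by positivity))
    have habs2 : |∑ S ∈ ((univ : Finset (Fin k)).erase i).powerset,
        w S * ((∑ x' ∈ univ.filter (fun x' : Fin k → Bool => ∀ j ∈ insert i S, x' j = x j),
            d x') / (2:ℝ) ^ (k - S.card))|
        = |sg x * ∑ S ∈ ((univ : Finset (Fin k)).erase i).powerset,
          w S * ((∑ x' ∈ univ.filter (fun x' : Fin k → Bool => ∀ j ∈ insert i S, x' j = x j),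
              d x') / (2:ℝ) ^ (k - S.card))| := by
      rw [abs_mul, hsgabs, one_mul]
    rw [habs2, hmul, abs_of_nonneg hnn]
  rw [Finset.sum_congr rfl (fun x _ => key x), Finset.sum_comm]
  have hfin : ∀ S ∈ ((univ : Finset (Fin k)).erase i).powerset,
      (∑ x : Fin k → Bool,
        w S * ((∑ x' ∈ univ.filter (fun x' : Fin k → Bool => ∀ j ∈ insert i S, x' j = x j),
            |d x'|) / (2:ℝ) ^ (k - S.card)))
      = w S * ((1 / 2) * ∑ x : Fin k → Bool, |d x|) := by
    intro S hS
    have hiS : i ∉ S := fun hin =>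
      (Finset.mem_erase.mp (Finset.mem_powerset.mp hS hin)).1 rfl
    have hcard : (insert i S).card = S.card + 1 := Finset.card_insert_of_notMem hiS
    have hle : S.card + 1 ≤ k := by
      have := Finset.card_le_univ (insert i S)
      simpa [hcard] using this
    rw [← Finset.mul_sum, ← Finset.sum_div,
      sum_sum_agree k (insert i S) (fun y => |d y|), hcard]
    have hpow : (2 : ℝ) ^ (k - S.card) = 2 * (2 : ℝ) ^ (k - (S.card + 1)) := by
      rw [← pow_succ']
      congr 1
      omega
    rw [hpow]
    have hpos : (0:ℝ) < (2 : ℝ) ^ (k - (S.card + 1)) := by positivity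
    field_simp
  rw [Finset.sum_congr rfl hfin, ← Finset.sum_mul, hw1, one_mul]
end

section
/- Dynamic-programming recurrence for Shapley states: with φ(v,G,k) := (1/(|G|+1)) · Σ_{S ⊆ G, |S| = k} C(|G|,k)^{-1} · P[S] for a function P : Finset U → ℝ, and for y ∉ G and δ ∈ ℝ such that P[S ∪ {y}] = δ · P[S] for all S ⊆ G, one has φ(v, G ∪ {y}, k) = ((|G|+1−k)/(|G|+2)) · φ(v,G,k) + (k/(|G|+2)) · δ · φ(v,G,k−1), where φ(v,G,−1) = 0. -/
open Finset

/-- The Shapley dynamic-programming state value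
`φ(G,k) = (1/(|G|+1)) · C(|G|,k)⁻¹ · Σ_{S ⊆ G, |S| = k} P(S)`
(equal to `0` for `k > |G|`). -/
noncomputable def phiDP {U : Type*} [DecidableEq U]
    (P : Finset U → ℝ) (G : Finset U) (k : ℕ) : ℝ :=
  (1 / ((G.card : ℝ) + 1)) * ((Nat.choose G.card k : ℝ))⁻¹ *
    ∑ S ∈ G.powerset.filter (fun S => S.card = k), P S

theorem shapley_state_recurrence {U : Type*} [DecidableEq U]
    (P : Finset U → ℝ) (G : Finset U) (y : U) (hy : y ∉ G) (δ : ℝ)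
    (hP : ∀ S ⊆ G, P (insert y S) = δ * P S)
    (k : ℕ) (hk : k ≤ G.card + 1) :
    phiDP P (insert y G) k
      = (((G.card : ℝ) + 1 - k) / ((G.card : ℝ) + 2)) * phiDP P G k
        + ((k : ℝ) / ((G.card : ℝ) + 2)) * δ * phiDP P G (k - 1) := by
  have hsum : ∀ m : ℕ, ∑ S ∈ (insert y G).powerset.filter (fun S => S.card = m), P S
      = (∑ S ∈ G.powerset.filter (fun S => S.card = m), P S)
        + δ * ∑ S ∈ G.powerset.filter (fun S => S.card + 1 = m), P S := by
    intro m
    rw [sum_filter, sum_filter, sum_filter, Finset.sum_powerset_insert hy, mul_sum]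
    congr 1
    refine Finset.sum_congr rfl ?_
    intro S hS
    have hyS : y ∉ S := fun h => hy (mem_powerset.mp hS h)
    rw [card_insert_of_notMem hyS, hP S (mem_powerset.mp hS)]
    split <;> simp
  unfold phiDP
  rw [card_insert_of_notMem hy, hsum k]
  set n := G.card with hn
  match k, hk with
  | 0, _ =>
    have h0 : G.powerset.filter (fun S => S.card + 1 = 0) = ∅ := by simp
    rw [h0, sum_empty, mul_zero, add_zero]
    have hn1 : (n : ℝ) + 1 ≠ 0 := by positivity
    have hn2 : (n : ℝ) + 2 ≠ 0 := by positivity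
    simp only [Nat.cast_zero, Nat.choose_zero_right, Nat.cast_one, inv_one]
    field_simp
    push_cast
    ring
  | j + 1, hk =>
    have hfe : G.powerset.filter (fun S => S.card + 1 = j + 1)
        = G.powerset.filter (fun S => S.card = j) := by
      apply filter_congr; intro S _; simp
    rw [hfe]
    set A := ∑ S ∈ G.powerset.filter (fun S => S.card = j + 1), P S with hA
    set B := ∑ S ∈ G.powerset.filter (fun S => S.card = j), P S with hB
    have hn1 : (n : ℝ) + 1 ≠ 0 := by positivity
    have hn2 : (n : ℝ) + 2 ≠ 0 := by positivity
    have hj1 : j + 1 - 1 = j := rfl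
    rw [hj1]
    have hjn : j + 1 ≤ n + 1 := hk
    have hCn1 : (Nat.choose (n + 1) (j + 1) : ℝ) ≠ 0 := by
      exact_mod_cast (Nat.choose_pos hjn).ne'
    have hC0 : (Nat.choose n j : ℝ) ≠ 0 := by
      exact_mod_cast (Nat.choose_pos (by omega : j ≤ n)).ne'
    have hc2 : ((n : ℝ) + 1) * (Nat.choose n j : ℝ)
        = ((j : ℝ) + 1) * (Nat.choose (n + 1) (j + 1) : ℝ) := by
      have h : (n + 1) * Nat.choose n j = Nat.choose (n + 1) (j + 1) * (j + 1) :=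
        Nat.add_one_mul_choose_eq n j
      calc ((n : ℝ) + 1) * (Nat.choose n j : ℝ)
          = (((n + 1) * Nat.choose n j : ℕ) : ℝ) := by push_cast; ring
        _ = ((Nat.choose (n + 1) (j + 1) * (j + 1) : ℕ) : ℝ) := by rw [h]
        _ = _ := by push_cast; ring
    have e2 : ((Nat.choose (n + 1) (j + 1) : ℝ))⁻¹
        = (((j : ℝ) + 1) / ((n : ℝ) + 1)) * ((Nat.choose n j : ℝ))⁻¹ := by
      field_simp
      linear_combination hc2
    rcases Nat.lt_or_ge j n with hjlt | hjge
    · have hjn' : j + 1 ≤ n := hjlt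
      have hC1 : (Nat.choose n (j + 1) : ℝ) ≠ 0 := by
        exact_mod_cast (Nat.choose_pos hjn').ne'
      have hc1 : ((n : ℝ) + 1) * (Nat.choose n (j + 1) : ℝ)
          = ((n : ℝ) + 1 - ((j : ℝ) + 1)) * (Nat.choose (n + 1) (j + 1) : ℝ) := by
        have h := Nat.choose_mul_succ_eq n (j + 1)
        calc ((n : ℝ) + 1) * (Nat.choose n (j + 1) : ℝ)
            = ((Nat.choose n (j + 1) * (n + 1) : ℕ) : ℝ) := by push_cast; ring
          _ = ((Nat.choose (n + 1) (j + 1) * (n + 1 - (j + 1)) : ℕ) : ℝ) := by rw [h]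
          _ = _ := by
              rw [Nat.cast_mul, Nat.cast_sub (by omega : j + 1 ≤ n + 1)]
              push_cast; ring
      have e1 : ((Nat.choose (n + 1) (j + 1) : ℝ))⁻¹
          = ((((n : ℝ) + 1 - ((j : ℝ) + 1)) / ((n : ℝ) + 1))) * ((Nat.choose n (j + 1) : ℝ))⁻¹ := by
        field_simp
        linear_combination hc1
      push_cast
      linear_combination (1 / ((n : ℝ) + 2)) * A * e1 + (1 / ((n : ℝ) + 2)) * δ * B * e2
    · have hjeq : j = n := le_antisymm (by omega) hjge
      subst hjeq
      have hAz : A = 0 := by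
        rw [hA]
        have h : G.powerset.filter (fun S => S.card = n + 1) = ∅ := by
          apply filter_eq_empty_iff.mpr
          intro S hS
          have := card_le_card (mem_powerset.mp hS)
          omega
        rw [h, sum_empty]
      rw [hAz]
      simp only [Nat.choose_self, Nat.cast_one, inv_one]
      push_cast
      field_simp
      ring
end

section
/- Dummy-feature invariance for Shapley state sums: if P(S ∪ {y}) = P(S) for all S ⊆ G (y ∉ G), then Σ_{k=0}^{|G|+1} φ(G ∪ {y}, k) = Σ_{k=0}^{|G|} φ(G, k), where φ(G,k) = (1/(|G|+1)) · C(|G|,k)^{-1} · Σ_{S ⊆ G, |S|=k} P(S). -/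
open Finset

theorem dummy_feature_invariance {U : Type*} [DecidableEq U]
    (P : Finset U → ℝ) (G : Finset U) (y : U) (hy : y ∉ G)
    (hP : ∀ S ⊆ G, P (insert y S) = P S) :
    ∑ k ∈ Finset.range (G.card + 2), phiDP P (insert y G) k
      = ∑ k ∈ Finset.range (G.card + 1), phiDP P G k := by
  classical
  set n := G.card with hn
  set A : ℕ → ℝ := fun k => ∑ S ∈ G.powersetCard k, P S with hA
  set c : ℕ → ℝ := fun k => (1 / ((n:ℝ) + 1)) * ((Nat.choose n k : ℝ))⁻¹ with hc
  set c' : ℕ → ℝ := fun k => (1 / ((n:ℝ) + 2)) * ((Nat.choose (n+1) k : ℝ))⁻¹ with hc'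
  have hfilt : ∀ (H : Finset U) (k : ℕ),
      H.powerset.filter (fun S => S.card = k) = H.powersetCard k := by
    intro H k; rw [Finset.powersetCard_eq_filter]
  have hcard : (insert y G).card = n + 1 := Finset.card_insert_of_notMem hy
  have hsplit : ∀ k, ∑ S ∈ (insert y G).powersetCard (k+1), P S = A (k+1) + A k := by
    intro k
    rw [Finset.powersetCard_succ_insert hy, Finset.sum_union, Finset.sum_image]
    · congr 1
      apply Finset.sum_congr rfl
      intro S hS
      exact hP S (Finset.mem_powersetCard.mp hS).1
    · intro S hS T hT hST
      have hyS : y ∉ S := fun h => hy ((Finset.mem_powersetCard.mp hS).1 h)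
      have hyT : y ∉ T := fun h => hy ((Finset.mem_powersetCard.mp hT).1 h)
      have := congrArg (fun s => Finset.erase s y) hST
      simpa [Finset.erase_insert hyS, Finset.erase_insert hyT] using this
    · rw [Finset.disjoint_left]
      intro S hS hS'
      have hyS : y ∉ S := fun h => hy ((Finset.mem_powersetCard.mp hS).1 h)
      obtain ⟨T, hT, rfl⟩ := Finset.mem_image.mp hS'
      exact hyS (Finset.mem_insert_self y T)
  have hzero : ∑ S ∈ (insert y G).powersetCard 0, P S = A 0 := by
    simp [hA]
  have hAnil : A (n+1) = 0 := by
    have h : G.powersetCard (n+1) = ∅ := by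
      rw [Finset.powersetCard_eq_empty]; omega
    simp [hA, h]
  have hL : ∀ k, phiDP P (insert y G) k
      = c' k * (∑ S ∈ (insert y G).powersetCard k, P S) := by
    intro k
    rw [phiDP, hcard, hfilt, hc']
    push_cast
    ring
  have hR : ∀ k, phiDP P G k = c k * A k := by
    intro k
    rw [phiDP, hfilt, hc, hA]
  have hcoef : ∀ k, k ≤ n → c' k + c' (k+1) = c k := by
    intro k hk
    have ha : (Nat.choose n k : ℝ) ≠ 0 :=
      Nat.cast_ne_zero.mpr (Nat.choose_pos hk).ne'
    have hb : (Nat.choose (n+1) k : ℝ) ≠ 0 :=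
      Nat.cast_ne_zero.mpr (Nat.choose_pos (by omega)).ne'
    have hcc : (Nat.choose (n+1) (k+1) : ℝ) ≠ 0 :=
      Nat.cast_ne_zero.mpr (Nat.choose_pos (by omega)).ne'
    have h1 : ((n:ℝ)+1) * (Nat.choose n k : ℝ)
        = (Nat.choose (n+1) (k+1) : ℝ) * ((k:ℝ)+1) := by
      exact_mod_cast congrArg (Nat.cast (R := ℝ)) (Nat.add_one_mul_choose_eq n k)
    have h2 : ((n:ℝ)+2) * (Nat.choose (n+1) k : ℝ)
        = ((Nat.choose (n+1) k : ℝ) + (Nat.choose (n+1) (k+1) : ℝ)) * ((k:ℝ)+1) := by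
      have h := Nat.add_one_mul_choose_eq (n+1) k
      have hp : Nat.choose (n+2) (k+1) = Nat.choose (n+1) k + Nat.choose (n+1) (k+1) :=
        Nat.choose_succ_succ (n+1) k
      rw [hp] at h
      exact_mod_cast congrArg (Nat.cast (R := ℝ)) h
    rw [hc', hc]
    have hn1 : ((n:ℝ)+1) ≠ 0 := by positivity
    have hn2 : ((n:ℝ)+2) ≠ 0 := by positivity
    have key : ((Nat.choose (n+1) k : ℝ) + (Nat.choose (n+1) (k+1) : ℝ)) *
          (((n:ℝ)+1) * (Nat.choose n k : ℝ))
        = ((n:ℝ)+2) * ((Nat.choose (n+1) k : ℝ) * (Nat.choose (n+1) (k+1) : ℝ)) := by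
      linear_combination ((Nat.choose (n+1) k : ℝ) + (Nat.choose (n+1) (k+1) : ℝ)) * h1
        - (Nat.choose (n+1) (k+1) : ℝ) * h2
    field_simp
    linear_combination key
  calc
    ∑ k ∈ Finset.range (n + 2), phiDP P (insert y G) k
        = ∑ k ∈ Finset.range (n + 2), c' k * (∑ S ∈ (insert y G).powersetCard k, P S) := by
          exact Finset.sum_congr rfl fun k _ => hL k
    _ = (∑ k ∈ Finset.range (n + 1),
          c' (k+1) * (∑ S ∈ (insert y G).powersetCard (k+1), P S))
          + c' 0 * (∑ S ∈ (insert y G).powersetCard 0, P S) := by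
          rw [Finset.sum_range_succ']
    _ = (∑ k ∈ Finset.range (n + 1), (c' (k+1) * A (k+1) + c' (k+1) * A k))
          + c' 0 * A 0 := by
          rw [hzero]
          congr 1
          exact Finset.sum_congr rfl fun k _ => by rw [hsplit k]; ring
    _ = ((∑ k ∈ Finset.range (n + 1), c' (k+1) * A (k+1)) + c' 0 * A 0)
          + ∑ k ∈ Finset.range (n + 1), c' (k+1) * A k := by
          rw [Finset.sum_add_distrib]; ring
    _ = (∑ k ∈ Finset.range (n + 2), c' k * A k)
          + ∑ k ∈ Finset.range (n + 1), c' (k+1) * A k := by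
          rw [Finset.sum_range_succ' (fun k => c' k * A k) (n+1)]
    _ = (∑ k ∈ Finset.range (n + 1), c' k * A k)
          + ∑ k ∈ Finset.range (n + 1), c' (k+1) * A k := by
          rw [Finset.sum_range_succ, hAnil, mul_zero, add_zero]
    _ = ∑ k ∈ Finset.range (n + 1), (c' k + c' (k+1)) * A k := by
          rw [← Finset.sum_add_distrib]
          exact Finset.sum_congr rfl fun k _ => by ring
    _ = ∑ k ∈ Finset.range (n + 1), c k * A k := by
          refine Finset.sum_congr rfl fun k hk => ?_
          rw [hcoef k (by simpa using Nat.lt_succ_iff.mp (Finset.mem_range.mp hk))]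
    _ = ∑ k ∈ Finset.range (n + 1), phiDP P G k := by
          exact Finset.sum_congr rfl fun k _ => (hR k).symm
end
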